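/- arXiv:2605.23575 — 6 statements merged into one kernel-verified Lean document; each statement's English description precedes it below -/
import Mathlib

section
/- There is no bounded continuous function w : ℝ² → ℝ² for which there exists a constant c > 0 such that |⟨x − y, w(x) − w(y)⟩| > c·‖w(x) − w(y)‖ for every pair of points x, y ∈ ℝ² with ‖x − y‖ > 1. -/
/-!
Up to replacing `w` by `-w`, one may assume `c ‖w x - w y‖ < ⟪x - y, w x - w y⟫` whenever
`‖x - y‖ > 1`: the inner product never vanishes on the connected set `{‖x - y‖ > 1}`.
Cutting a long segment that stays in a narrow cone around a unit vector `u` into steps whose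
component along `u` lies between 2 and 4 then gives `c ‖w y - w x‖ ≤ 8 ⟪u, w y - w x⟫` for its
endpoints. If `⟪u, w p⟫` and `⟪u', w q⟫` are within `ε` of their suprema and `u'` is close to
`u`, the point `z = p + T u` (with `T` large) is reached from `p` along `u` and from `q` along
`u'`, so `‖w p - w q‖ ≤ 16 ε / c`. Since the unit circle is connected, the same holds, with
some constant, for `u' = -u`; letting `ε → 0` gives `sup ⟪u, w⟫ ≤ inf ⟪u, w⟫` for every `u`,
so `w` is constant, which contradicts the inequality.
-/

open scoped RealInnerProductSpace
open Set Metric Filter Topology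

theorem IsPreconnected.pos_of_ne_zero {X : Type*} [TopologicalSpace X] {s : Set X} {f : X → ℝ}
    (hs : IsPreconnected s) (hf : ContinuousOn f s) (hf₀ : ∀ x ∈ s, f x ≠ 0) {a b : X}
    (ha : a ∈ s) (hb : b ∈ s) (hfa : 0 < f a) : 0 < f b := by
  by_contra! hfb
  obtain ⟨x, hx, hfx⟩ := hs.intermediate_value hb ha hf ⟨hfb, hfa.le⟩
  exact hf₀ x hx hfx

def IsAlmostMaximizer {X : Type*} (f : X → ℝ) (ε : ℝ) (p : X) : Prop :=
  ∀ x, f x ≤ f p + ε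

theorem exists_isAlmostMaximizer {X : Type*} [Nonempty X] {f : X → ℝ} (hf : BddAbove (range f))
    {ε : ℝ} (hε : 0 < ε) : ∃ p, IsAlmostMaximizer f ε p := by
  obtain ⟨_, ⟨p, rfl⟩, hp⟩ := exists_lt_of_lt_csSup (range_nonempty f) (sub_lt_self _ hε)
  exact ⟨p, fun x => by linarith [le_csSup hf (mem_range_self x)]⟩

variable {E : Type*} [NormedAddCommGroup E] [InnerProductSpace ℝ E]

theorem bddAbove_range_inner {w : E → E} {K : ℝ} (hK : ∀ x, ‖w x‖ ≤ K) (u : E) :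
    BddAbove (range fun x => ⟪u, w x⟫) :=
  ⟨‖u‖ * K, by
    rintro _ ⟨x, rfl⟩
    exact (real_inner_le_norm _ _).trans (mul_le_mul_of_nonneg_left (hK x) (norm_nonneg u))⟩

theorem mul_norm_sub_le_mul_inner_of_steps {c K : ℝ} (hc : 0 ≤ c) (u : E) (f : ℕ → E) (n : ℕ)
    (hf : ∀ k < n, c * ‖f (k + 1) - f k‖ ≤ K * ⟪u, f (k + 1) - f k⟫) :
    c * ‖f n - f 0‖ ≤ K * ⟪u, f n - f 0⟫ := by
  induction n with
  | zero => simp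
  | succ n ih =>
    have hsplit : f (n + 1) - f 0 = (f (n + 1) - f n) + (f n - f 0) := by abel
    calc c * ‖f (n + 1) - f 0‖ ≤ c * ‖f (n + 1) - f n‖ + c * ‖f n - f 0‖ := by
          rw [hsplit, ← mul_add]; exact mul_le_mul_of_nonneg_left (norm_add_le _ _) hc
      _ ≤ K * ⟪u, f (n + 1) - f n⟫ + K * ⟪u, f n - f 0⟫ :=
          add_le_add (hf n n.lt_succ_self) (ih fun k hk => hf k (hk.trans n.lt_succ_self))
      _ = K * ⟪u, f (n + 1) - f 0⟫ := by rw [hsplit, inner_add_right, mul_add]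

theorem isPreconnected_setOf_one_lt_norm_sub (hE : 1 < Module.rank ℝ E) :
    IsPreconnected {p : E × E | 1 < ‖p.1 - p.2‖} := by
  have hS : {p : E × E | 1 < ‖p.1 - p.2‖} =
      (fun q : E × E × ℝ => (q.1 + q.2.2 • q.2.1, q.1)) '' (univ ×ˢ sphere 0 1 ×ˢ Ioi 1) := by
    ext ⟨x, y⟩
    constructor
    · intro (h : 1 < ‖x - y‖)
      have h₀ : ‖x - y‖ ≠ 0 := (zero_lt_one.trans h).ne'
      refine ⟨(y, ‖x - y‖⁻¹ • (x - y), ‖x - y‖), ⟨trivial, ?_, h⟩, ?_⟩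
      · simp [norm_smul, h₀]
      · simp [smul_smul, h₀]
    · rintro ⟨⟨y', u, r⟩, ⟨-, hu, hr⟩, heq⟩
      simp only [Prod.mk.injEq] at heq
      obtain ⟨rfl, rfl⟩ := heq
      simp only [mem_sphere_zero_iff_norm, mem_Ioi] at hu hr
      simpa [norm_smul, hu, abs_of_pos (zero_lt_one.trans hr)] using hr
  rw [hS]
  exact (isPreconnected_univ.prod ((isPreconnected_sphere hE 0 1).prod isPreconnected_Ioi)).image _
    (by fun_prop)

def IsFarMonotone (c : ℝ) (w : E → E) : Prop :=
  ∀ x y, 1 < ‖x - y‖ → c * ‖w x - w y‖ < ⟪x - y, w x - w y⟫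

theorem isFarMonotone_or_isFarMonotone_neg (hE : 1 < Module.rank ℝ E) {c : ℝ} {w : E → E}
    (hw : Continuous w) (hc : 0 ≤ c)
    (H : ∀ x y, 1 < ‖x - y‖ → c * ‖w x - w y‖ < |⟪x - y, w x - w y⟫|) :
    IsFarMonotone c w ∨ IsFarMonotone c (-w) := by
  set S := {p : E × E | 1 < ‖p.1 - p.2‖}
  set g : E × E → ℝ := fun p => ⟪p.1 - p.2, w p.1 - w p.2⟫
  have hg : Continuous g := by fun_prop
  have hg₀ : ∀ p ∈ S, g p ≠ 0 := fun p hp h₀ => by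
    have := H p.1 p.2 hp
    rw [show ⟪p.1 - p.2, w p.1 - w p.2⟫ = 0 from h₀, abs_zero] at this
    exact this.not_ge (mul_nonneg hc (norm_nonneg _))
  have : Nontrivial E := rank_pos_iff_nontrivial.mp (zero_lt_one.trans hE)
  obtain ⟨x₀, hx₀⟩ := exists_norm_eq E zero_le_two
  have ha : (x₀, 0) ∈ S := by simp [S, hx₀]
  have hS := isPreconnected_setOf_one_lt_norm_sub hE
  rcases (hg₀ _ ha).lt_or_gt with hneg | hpos
  · refine .inr fun x y hxy => ?_
    have hneg' : 0 < -⟪x - y, w x - w y⟫ := hS.pos_of_ne_zero (b := (x, y)) hg.neg.continuousOn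
      (fun p hp => neg_ne_zero.mpr (hg₀ p hp)) ha hxy (neg_pos.mpr hneg)
    have hH := H x y hxy
    rw [abs_of_neg (neg_pos.mp hneg')] at hH
    show c * ‖-w x - -w y‖ < ⟪x - y, -w x - -w y⟫
    rwa [neg_sub_neg, ← neg_sub (w x), norm_neg, inner_neg_right]
  · refine .inl fun x y hxy => ?_
    have hpos' : 0 < ⟪x - y, w x - w y⟫ :=
      hS.pos_of_ne_zero (b := (x, y)) hg.continuousOn hg₀ ha hxy hpos
    simpa only [abs_of_pos hpos'] using H x y hxy

namespace IsFarMonotone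

variable {c : ℝ} {w : E → E}

theorem mono (hw : IsFarMonotone c w) {c' : ℝ} (hc' : c' ≤ c) : IsFarMonotone c' w :=
  fun x y hxy => (mul_le_mul_of_nonneg_right hc' (norm_nonneg _)).trans_lt (hw x y hxy)

theorem mul_norm_sub_le_of_step (hw : IsFarMonotone c w) {x y u v : E} {a : ℝ}
    (hxy : y - x = a • u + v) (hfar : 1 < ‖y - x‖) (hv : ‖v‖ ≤ c / 2) :
    c * ‖w y - w x‖ ≤ 2 * a * ⟪u, w y - w x⟫ := by
  have hmono := hw y x hfar
  rw [hxy, inner_add_left, real_inner_smul_left] at hmono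
  have hv' : ⟪v, w y - w x⟫ ≤ c / 2 * ‖w y - w x‖ :=
    (real_inner_le_norm _ _).trans (mul_le_mul_of_nonneg_right hv (norm_nonneg _))
  linarith

theorem mul_norm_sub_le_of_mem_cone (hw : IsFarMonotone c w) (hc : 0 ≤ c) (hc₁ : c ≤ 1)
    {x y u v : E} {a : ℝ} (hu : ‖u‖ = 1) (hxy : y - x = a • u + v) (ha : 4 ≤ a)
    (hv : ‖v‖ ≤ c * a / 8) :
    c * ‖w y - w x‖ ≤ 8 * ⟪u, w y - w x⟫ := by
  set n := ⌊a / 2⌋₊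
  have hn_le : (n : ℝ) ≤ a / 2 := Nat.floor_le (by linarith)
  have hn_gt : a / 2 < n + 1 := Nat.lt_floor_add_one _
  have hn : (0 : ℝ) < n := by linarith
  let f : ℕ → E := fun k => w (x + ((k : ℝ) / n) • (y - x))
  have hf0 : f 0 = w x := by simp [f]
  have hfn : f n = w y := by simp [f, hn.ne']
  rw [← hf0, ← hfn]
  refine mul_norm_sub_le_mul_inner_of_steps hc u f n fun k _ => ?_
  have hstep : (x + (((k + 1 : ℕ) : ℝ) / n) • (y - x)) - (x + ((k : ℝ) / n) • (y - x))
      = (a / n) • u + (1 / n : ℝ) • v := by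
    rw [add_sub_add_left_eq_sub, ← sub_smul, hxy, smul_add, smul_smul]
    congr 2 <;> push_cast <;> ring
  have hs₂ : 2 ≤ a / n := by rw [le_div_iff₀ hn]; linarith
  have hs₄ : a / n ≤ 4 := by rw [div_le_iff₀ hn]; linarith
  have ht : ‖(1 / n : ℝ) • v‖ ≤ c / 2 := by
    rw [norm_smul, Real.norm_of_nonneg (by positivity), one_div, inv_mul_le_iff₀ hn]
    nlinarith
  have hfar : 1 < ‖(a / n) • u + (1 / n : ℝ) • v‖ := by
    have := norm_le_add_norm_add ((a / n) • u) ((1 / n : ℝ) • v)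
    rw [norm_smul, hu, mul_one, Real.norm_of_nonneg (by linarith)] at this
    linarith
  have hkey := hw.mul_norm_sub_le_of_step hstep (hstep ▸ hfar) ht
  have hinc : 0 ≤ ⟪u, f (k + 1) - f k⟫ := by
    nlinarith [mul_nonneg hc (norm_nonneg (f (k + 1) - f k))]
  nlinarith

theorem mul_norm_sub_le_of_isAlmostMaximizer (hw : IsFarMonotone c w) (hc : 0 < c) (hc₁ : c ≤ 1)
    {u u' p q : E} {ε : ℝ} (hu : ‖u‖ = 1) (hu' : ‖u'‖ = 1) (huu' : ‖u - u'‖ ≤ c / 16)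
    (hp : IsAlmostMaximizer (fun x => ⟪u, w x⟫) ε p)
    (hq : IsAlmostMaximizer (fun x => ⟪u', w x⟫) ε q) :
    c * ‖w p - w q‖ ≤ 16 * ε := by
  set T := 4 + 16 * ‖p - q‖ / c
  have hT : 4 ≤ T := le_add_of_nonneg_right (by positivity)
  have hpq : ‖p - q‖ = (T - 4) * c / 16 := by simp only [T]; field_simp; ring
  set z := p + T • u
  have hzp : c * ‖w z - w p‖ ≤ 8 * ⟪u, w z - w p⟫ :=
    hw.mul_norm_sub_le_of_mem_cone hc.le hc₁ (v := 0) hu (by simp [z]) hT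
      (by rw [norm_zero]; positivity)
  have hzq : c * ‖w z - w q‖ ≤ 8 * ⟪u', w z - w q⟫ := by
    refine hw.mul_norm_sub_le_of_mem_cone hc.le hc₁ (v := T • (u - u') + (p - q)) hu'
      (by simp only [z]; module) hT ?_
    calc ‖T • (u - u') + (p - q)‖ ≤ T * ‖u - u'‖ + ‖p - q‖ := by
          grw [norm_add_le, norm_smul, Real.norm_of_nonneg (by linarith)]
      _ ≤ T * (c / 16) + (T - 4) * c / 16 := by rw [hpq]; gcongr
      _ ≤ c * T / 8 := by nlinarith
  have hεp := hp z
  have hεq := hq z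
  simp only [inner_sub_right] at hzp hzq
  calc c * ‖w p - w q‖ ≤ c * ‖w z - w p‖ + c * ‖w z - w q‖ := by
        rw [← mul_add, norm_sub_rev (w z)]
        exact mul_le_mul_of_nonneg_left (norm_sub_le_norm_sub_add_norm_sub _ _ _) hc.le
    _ ≤ 16 * ε := by linarith

end IsFarMonotone

def AlmostMaximizersMerge (w : E → E) (u u' : E) : Prop :=
  ∃ C, ∀ ε > 0, ∀ p q, IsAlmostMaximizer (fun x => ⟪u, w x⟫) ε p →
    IsAlmostMaximizer (fun x => ⟪u', w x⟫) ε q → ‖w p - w q‖ ≤ C * ε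

namespace AlmostMaximizersMerge

variable {w : E → E} {u u' u'' : E}

theorem symm (h : AlmostMaximizersMerge w u u') : AlmostMaximizersMerge w u' u :=
  let ⟨C, hC⟩ := h
  ⟨C, fun ε hε p q hp hq => norm_sub_rev (w p) (w q) ▸ hC ε hε q p hq hp⟩

theorem trans {K : ℝ} (hK : ∀ x, ‖w x‖ ≤ K) (h : AlmostMaximizersMerge w u u')
    (h' : AlmostMaximizersMerge w u' u'') : AlmostMaximizersMerge w u u'' := by
  obtain ⟨C, hC⟩ := h
  obtain ⟨C', hC'⟩ := h'
  refine ⟨C + C', fun ε hε p q hp hq => ?_⟩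
  obtain ⟨r, hr⟩ := exists_isAlmostMaximizer (bddAbove_range_inner hK u') hε
  calc ‖w p - w q‖ ≤ ‖w p - w r‖ + ‖w r - w q‖ := norm_sub_le_norm_sub_add_norm_sub _ _ _
    _ ≤ C * ε + C' * ε := add_le_add (hC ε hε p r hp hr) (hC' ε hε r q hr hq)
    _ = (C + C') * ε := (add_mul _ _ _).symm

theorem inner_sub_nonpos {K : ℝ} (hK : ∀ x, ‖w x‖ ≤ K) (h : AlmostMaximizersMerge w u (-u))
    (x y : E) : ⟪u, w x - w y⟫ ≤ 0 := by
  obtain ⟨C, hC⟩ := h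
  have hbound : ∀ ε > 0, ⟪u, w x - w y⟫ ≤ (‖u‖ * C + 2) * ε := by
    intro ε hε
    obtain ⟨p, hp⟩ := exists_isAlmostMaximizer (bddAbove_range_inner hK u) hε
    obtain ⟨q, hq⟩ := exists_isAlmostMaximizer (bddAbove_range_inner hK (-u)) hε
    have hpq : ⟪u, w p - w q⟫ ≤ ‖u‖ * (C * ε) :=
      (real_inner_le_norm _ _).trans
        (mul_le_mul_of_nonneg_left (hC ε hε p q hp hq) (norm_nonneg u))
    have hx := hp x
    have hy := hq y
    simp only [inner_neg_left, inner_sub_right] at hx hy hpq ⊢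
    linarith
  have hlim : Tendsto (fun ε => (‖u‖ * C + 2) * ε) (𝓝[>] 0) (𝓝 0) := by
    simpa using ((continuous_const_mul (‖u‖ * C + 2)).tendsto 0).mono_left nhdsWithin_le_nhds
  exact ge_of_tendsto hlim (eventually_nhdsWithin_of_forall hbound)

end AlmostMaximizersMerge

namespace IsFarMonotone

variable {c K : ℝ} {w : E → E}

theorem almostMaximizersMerge_neg (hE : 1 < Module.rank ℝ E) (hw : IsFarMonotone c w)
    (hK : ∀ x, ‖w x‖ ≤ K) (hc : 0 < c) (hc₁ : c ≤ 1) {u : E} (hu : ‖u‖ = 1) :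
    AlmostMaximizersMerge w u (-u) := by
  refine (isPreconnected_sphere hE 0 1).induction₂ (AlmostMaximizersMerge w) (fun v hv => ?_)
    (fun _ _ _ _ _ _ => AlmostMaximizersMerge.trans hK) (fun _ _ _ _ => .symm)
    (by simpa using hu) (by simpa using hu)
  filter_upwards [self_mem_nhdsWithin,
    mem_nhdsWithin_of_mem_nhds (closedBall_mem_nhds v (by positivity : 0 < c / 16))]
    with v' hv' hvv'
  rw [mem_sphere_zero_iff_norm] at hv hv'
  rw [mem_closedBall, dist_eq_norm, norm_sub_rev] at hvv'
  refine ⟨16 / c, fun ε _ p q hp hq => ?_⟩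
  rw [div_mul_eq_mul_div, le_div_iff₀ hc, mul_comm]
  exact hw.mul_norm_sub_le_of_isAlmostMaximizer hc hc₁ hv hv' hvv' hp hq

theorem eq_of_bounded (hE : 1 < Module.rank ℝ E) (hw : IsFarMonotone c w)
    (hK : ∀ x, ‖w x‖ ≤ K) (hc : 0 < c) (hc₁ : c ≤ 1) (x y : E) : w x = w y := by
  by_contra hne
  have hd : w x - w y ≠ 0 := sub_ne_zero.mpr hne
  set u := ‖w x - w y‖⁻¹ • (w x - w y)
  have hu : ‖u‖ = 1 := norm_smul_inv_norm hd
  have hpos : 0 < ⟪u, w x - w y⟫ := by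
    rw [real_inner_smul_left, real_inner_self_eq_norm_sq, sq,
      inv_mul_cancel_left₀ (norm_ne_zero_iff.mpr hd)]
    exact norm_pos_iff.mpr hd
  exact hpos.not_ge ((hw.almostMaximizersMerge_neg hE hK hc hc₁ hu).inner_sub_nonpos hK x y)

end IsFarMonotone

theorem not_isFarMonotone_of_bounded (hE : 1 < Module.rank ℝ E) {c K : ℝ} {w : E → E}
    (hK : ∀ x, ‖w x‖ ≤ K) (hc : 0 < c) : ¬ IsFarMonotone c w := by
  intro hw
  have hconst := (hw.mono (min_le_left c 1)).eq_of_bounded hE hK (lt_min hc one_pos)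
    (min_le_right c 1)
  have : Nontrivial E := rank_pos_iff_nontrivial.mp (zero_lt_one.trans hE)
  obtain ⟨x, hx⟩ := exists_norm_eq E zero_le_two
  have := hw x 0 (by simp [hx])
  simp [hconst x 0] at this

/-- There is no bounded continuous function `w : ℝ² → ℝ²` for which there exists a
constant `c > 0` such that `|⟨x − y, w x − w y⟩| > c·‖w x − w y‖` for every pair of
points `x, y ∈ ℝ²` with `‖x − y‖ > 1`. -/
theorem no_universal_continuous_vector_field :
    ¬ ∃ (w : EuclideanSpace ℝ (Fin 2) → EuclideanSpace ℝ (Fin 2)) (K c : ℝ),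
      Continuous w ∧ (∀ x, ‖w x‖ ≤ K) ∧ 0 < c ∧
      ∀ x y : EuclideanSpace ℝ (Fin 2), ‖x - y‖ > 1 →
        |⟪x - y, w x - w y⟫| > c * ‖w x - w y‖ := by
  rintro ⟨w, K, c, hw, hK, hc, H⟩
  have hE : 1 < Module.rank ℝ (EuclideanSpace ℝ (Fin 2)) := by
    rw [← Module.finrank_eq_rank, finrank_euclideanSpace_fin]; norm_num
  rcases isFarMonotone_or_isFarMonotone_neg hE hw hc.le H with hmono | hmono
  · exact not_isFarMonotone_of_bounded hE hK hc hmono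
  · exact not_isFarMonotone_of_bounded hE (fun x => (norm_neg (w x)).trans_le (hK x)) hc hmono
end

section
/- Let φ : ℤ → ℝ be bounded and strictly increasing, and define w : ℤ² → ℝ² by w(x₁, x₂) = (φ(x₁), φ(x₂)). Then w is bounded and injective, and for every constant c with 0 < c < 1 and every pair of distinct points x, y ∈ ℤ², one has |⟨x − y, w(x) − w(y)⟩| > c·‖w(x) − w(y)‖. -/
open scoped RealInnerProductSpace

/-- The embedding of the integer lattice `ℤ²` into the Euclidean plane. -/
noncomputable def latticeEmb (p : ℤ × ℤ) : EuclideanSpace ℝ (Fin 2) :=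
  WithLp.toLp 2 ![(p.1 : ℝ), (p.2 : ℝ)]

/-- The velocity-type assignment `w(x₁,x₂) = (φ x₁, φ x₂)`. -/
noncomputable def lattW (φ : ℤ → ℝ) (p : ℤ × ℤ) : EuclideanSpace ℝ (Fin 2) :=
  WithLp.toLp 2 ![φ p.1, φ p.2]

lemma sqrt_sq_add_sq_le (a b : ℝ) : Real.sqrt (a ^ 2 + b ^ 2) ≤ |a| + |b| := by
  rw [show a ^ 2 + b ^ 2 = |a| ^ 2 + |b| ^ 2 by rw [sq_abs, sq_abs]]
  have h : |a| ^ 2 + |b| ^ 2 ≤ (|a| + |b|) ^ 2 := by nlinarith [abs_nonneg a, abs_nonneg b]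
  calc Real.sqrt (|a| ^ 2 + |b| ^ 2) ≤ Real.sqrt ((|a| + |b|) ^ 2) := Real.sqrt_le_sqrt h
    _ = |a| + |b| := Real.sqrt_sq (by positivity)

lemma norm_lattW (v : EuclideanSpace ℝ (Fin 2)) :
    ‖v‖ = Real.sqrt (v 0 ^ 2 + v 1 ^ 2) := by
  rw [EuclideanSpace.norm_eq, Fin.sum_univ_two, Real.norm_eq_abs, Real.norm_eq_abs, sq_abs, sq_abs]

lemma key_ineq (φ : ℤ → ℝ) (hmono : StrictMono φ) (m n : ℤ) :
    |φ m - φ n| ≤ ((m : ℝ) - n) * (φ m - φ n) := by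
  rcases lt_trichotomy m n with h | h | h
  · have h1 : φ m < φ n := hmono h
    have h2 : (m : ℝ) - n ≤ -1 := by
      have : (m : ℝ) + 1 ≤ n := by exact_mod_cast h
      linarith
    rw [abs_of_nonpos (by linarith)]
    nlinarith
  · subst h; simp
  · have h1 : φ n < φ m := hmono h
    have h2 : (1 : ℝ) ≤ (m : ℝ) - n := by
      have : (n : ℝ) + 1 ≤ m := by exact_mod_cast h
      linarith
    rw [abs_of_nonneg (by linarith)]
    nlinarith

/-- Let `φ : ℤ → ℝ` be bounded and strictly increasing, and define
`w : ℤ² → ℝ²` by `w (x₁, x₂) = (φ x₁, φ x₂)`. Then `w` is bounded and injective,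
and for every `0 < c < 1` and all distinct `x, y ∈ ℤ²` one has
`|⟨x − y, w x − w y⟩| > c · ‖w x − w y‖`. -/
theorem lattice_construction (φ : ℤ → ℝ) (hbdd : ∃ K : ℝ, ∀ n : ℤ, |φ n| ≤ K)
    (hmono : StrictMono φ) :
    (∃ K : ℝ, ∀ p : ℤ × ℤ, ‖lattW φ p‖ ≤ K) ∧
    Function.Injective (lattW φ) ∧
    ∀ c : ℝ, 0 < c → c < 1 → ∀ x y : ℤ × ℤ, x ≠ y →
      |⟪latticeEmb x - latticeEmb y, lattW φ x - lattW φ y⟫| >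
        c * ‖lattW φ x - lattW φ y‖ := by
  refine ⟨?_, ?_, ?_⟩
  · obtain ⟨K, hK⟩ := hbdd
    refine ⟨2 * K, fun p => ?_⟩
    rw [norm_lattW]
    have := hK p.1; have := hK p.2
    have e0 : lattW φ p 0 = φ p.1 := rfl
    have e1 : lattW φ p 1 = φ p.2 := rfl
    rw [e0, e1]
    calc Real.sqrt (φ p.1 ^ 2 + φ p.2 ^ 2) ≤ |φ p.1| + |φ p.2| := sqrt_sq_add_sq_le _ _
      _ ≤ 2 * K := by linarith
  · intro x y h
    have h0 := congrFun (congrArg WithLp.ofLp h) 0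
    have h1 := congrFun (congrArg WithLp.ofLp h) 1
    simp only [lattW] at h0 h1
    have e0 : φ x.1 = φ y.1 := h0
    have e1 : φ x.2 = φ y.2 := h1
    exact Prod.ext (hmono.injective e0) (hmono.injective e1)
  · intro c hc hc1 x y hxy
    set a := φ x.1 - φ y.1 with ha
    set b := φ x.2 - φ y.2 with hb
    have hinner : ⟪latticeEmb x - latticeEmb y, lattW φ x - lattW φ y⟫ =
        ((x.1 : ℝ) - y.1) * a + ((x.2 : ℝ) - y.2) * b := by
      rw [PiLp.inner_apply, Fin.sum_univ_two]
      simp [latticeEmb, lattW, ha, hb]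
      ring
    have hnorm : ‖lattW φ x - lattW φ y‖ = Real.sqrt (a ^ 2 + b ^ 2) := by
      rw [norm_lattW]
      have e0 : (lattW φ x - lattW φ y) 0 = a := rfl
      have e1 : (lattW φ x - lattW φ y) 1 = b := rfl
      rw [e0, e1]
    have hkey1 := key_ineq φ hmono x.1 y.1
    have hkey2 := key_ineq φ hmono x.2 y.2
    rw [← ha] at hkey1
    rw [← hb] at hkey2
    have hsqrt := sqrt_sq_add_sq_le a b
    have hpos : 0 < Real.sqrt (a ^ 2 + b ^ 2) := by
      have hne : a ≠ 0 ∨ b ≠ 0 := by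
        by_contra h
        push_neg at h
        obtain ⟨h1, h2⟩ := h
        apply hxy
        exact Prod.ext (hmono.injective (by linarith [ha ▸ h1] : φ x.1 = φ y.1))
          (hmono.injective (by linarith [hb ▸ h2] : φ x.2 = φ y.2))
      apply Real.sqrt_pos.mpr
      rcases hne with h | h <;> positivity
    rw [hinner, hnorm]
    have hI : Real.sqrt (a ^ 2 + b ^ 2) ≤ ((x.1 : ℝ) - y.1) * a + ((x.2 : ℝ) - y.2) * b := by
      calc Real.sqrt (a ^ 2 + b ^ 2) ≤ |a| + |b| := hsqrt
        _ ≤ _ := by linarith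
    calc c * Real.sqrt (a ^ 2 + b ^ 2) < 1 * Real.sqrt (a ^ 2 + b ^ 2) := by
          exact mul_lt_mul_of_pos_right hc1 hpos
      _ = Real.sqrt (a ^ 2 + b ^ 2) := one_mul _
      _ ≤ ((x.1 : ℝ) - y.1) * a + ((x.2 : ℝ) - y.2) * b := hI
      _ ≤ |((x.1 : ℝ) - y.1) * a + ((x.2 : ℝ) - y.2) * b| := le_abs_self _
end

section
/- Let φ : ℤ → ℝ be strictly increasing, and define w : ℤ² → ℝ² by w(x₁, x₂) = (φ(x₁), φ(x₂)). Then for all x, y ∈ ℤ², one has ⟨x − y, w(x) − w(y)⟩ ≥ ‖w(x) − w(y)‖. -/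
open scoped RealInnerProductSpace

lemma key (φ : ℤ → ℝ) (hmono : StrictMono φ) (m n : ℤ) :
    ((m : ℝ) - n) * (φ m - φ n) ≥ |φ m - φ n| := by
  rcases lt_trichotomy m n with h | h | h
  · have h1 : φ m < φ n := hmono h
    have h2 : (m : ℝ) - n ≤ -1 := by
      have : (m : ℝ) + 1 ≤ n := by exact_mod_cast h
      linarith
    rw [abs_of_nonpos (by linarith)]
    nlinarith
  · subst h; simp
  · have h1 : φ n < φ m := hmono h
    have h2 : (1 : ℝ) ≤ (m : ℝ) - n := by
      have : (n : ℝ) + 1 ≤ m := by exact_mod_cast h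
      linarith
    rw [abs_of_nonneg (by linarith)]
    nlinarith

/-- Let `φ : ℤ → ℝ` be strictly increasing and `w (x₁, x₂) = (φ x₁, φ x₂)`. Then
for all `x, y ∈ ℤ²` one has `⟨x − y, w x − w y⟩ ≥ ‖w x − w y‖`. -/
theorem lattice_inner_ge_norm (φ : ℤ → ℝ) (hmono : StrictMono φ) :
    ∀ x y : ℤ × ℤ,
      ⟪latticeEmb x - latticeEmb y, lattW φ x - lattW φ y⟫ ≥
        ‖lattW φ x - lattW φ y‖ := by
  intro x y
  set a : ℝ := φ x.1 - φ y.1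
  set b : ℝ := φ x.2 - φ y.2
  have hinner : ⟪latticeEmb x - latticeEmb y, lattW φ x - lattW φ y⟫ =
      ((x.1 : ℝ) - y.1) * a + ((x.2 : ℝ) - y.2) * b := by
    simp [latticeEmb, lattW, PiLp.inner_apply, Fin.sum_univ_two, a, b]
    ring
  have hnorm : ‖lattW φ x - lattW φ y‖ = Real.sqrt (a ^ 2 + b ^ 2) := by
    rw [EuclideanSpace.norm_eq, Fin.sum_univ_two]
    simp [lattW, a, b, sq_abs]
  have h1 : ((x.1 : ℝ) - y.1) * a ≥ |a| := key φ hmono x.1 y.1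
  have h2 : ((x.2 : ℝ) - y.2) * b ≥ |b| := key φ hmono x.2 y.2
  have hs : Real.sqrt (a ^ 2 + b ^ 2) ≤ |a| + |b| := by
    rw [show a ^ 2 + b ^ 2 = |a| ^ 2 + |b| ^ 2 by simp [sq_abs]]
    have := Real.sqrt_le_sqrt (show |a| ^ 2 + |b| ^ 2 ≤ (|a| + |b|) ^ 2 by
      nlinarith [abs_nonneg a, abs_nonneg b])
    calc Real.sqrt (|a| ^ 2 + |b| ^ 2) ≤ Real.sqrt ((|a| + |b|) ^ 2) := this
      _ = |a| + |b| := Real.sqrt_sq (by positivity)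
  rw [hinner, hnorm]
  linarith
end

section
/- There exist a function v : ℤ² → ℝ² and constants 0 < m ≤ M < ∞ and c > 0 such that: v is injective; m ≤ ‖v(x)‖ ≤ M for every x ∈ ℤ²; and for every pair of distinct points x, y ∈ ℤ² and every time t ∈ ℝ, ‖(x + t·v(x)) − (y + t·v(y))‖ ≥ c. -/
open Real RealInnerProductSpace
open scoped EuclideanSpace

section

variable {E : Type*} [NormedAddCommGroup E] [InnerProductSpace ℝ E]

theorem one_le_norm_of_norm_le_inner {w e : E} (he : e ≠ 0) (h : ‖e‖ ≤ ⟪w, e⟫) : 1 ≤ ‖w‖ := by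
  refine le_of_mul_le_mul_right ?_ (norm_pos_iff.mpr he)
  simpa only [one_mul] using h.trans (real_inner_le_norm w e)

theorem one_le_norm_sub_of_skew_velocity {ι : Type*} (J : E →ₗ[ℝ] E) (hJ : ∀ z, ⟪J z, z⟫ = 0)
    (P u : ι → E) (a : E) {x y : ι} (hxy : u x ≠ u y)
    (h : ‖u x - u y‖ ≤ ⟪P x - P y, u x - u y⟫) (t : ℝ) :
    1 ≤ ‖(P x + t • (a + J (u x))) - (P y + t • (a + J (u y)))‖ := by
  have hrel : (P x + t • (a + J (u x))) - (P y + t • (a + J (u y)))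
      = (P x - P y) + t • J (u x - u y) := by
    rw [map_sub]; module
  rw [hrel]
  refine one_le_norm_of_norm_le_inner (sub_ne_zero.mpr hxy) ?_
  rwa [inner_add_left, real_inner_smul_left, hJ, mul_zero, add_zero]

end

theorem Monotone.abs_sub_le_intCast_sub_mul {f : ℝ → ℝ} (hf : Monotone f) (a b : ℤ) :
    |f a - f b| ≤ ((a : ℝ) - b) * (f a - f b) := by
  rcases lt_trichotomy a b with hab | rfl | hab
  · have hf' : f a ≤ f b := hf (Int.cast_le.mpr hab.le)
    have : (a : ℝ) + 1 ≤ b := by exact_mod_cast hab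
    rw [abs_of_nonpos (by linarith)]
    nlinarith
  · simp
  · have hf' : f b ≤ f a := hf (Int.cast_le.mpr hab.le)
    have : (b : ℝ) + 1 ≤ a := by exact_mod_cast hab
    rw [abs_of_nonneg (by linarith)]
    nlinarith

theorem EuclideanSpace.norm_le_sum_abs {ι : Type*} [Fintype ι] (z : EuclideanSpace ℝ ι) :
    ‖z‖ ≤ ∑ i, |z i| := by
  rw [EuclideanSpace.norm_eq, Real.sqrt_le_iff]
  refine ⟨Finset.sum_nonneg fun i _ => abs_nonneg _, ?_⟩
  simpa only [Real.norm_eq_abs] using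
    Finset.sum_sq_le_sq_sum_of_nonneg fun i _ => abs_nonneg (z i)

noncomputable def arctanField (p : ℤ × ℤ) : EuclideanSpace ℝ (Fin 2) :=
  WithLp.toLp 2 ![arctan p.1, arctan p.2]

theorem arctanField_injective : Function.Injective arctanField := by
  intro p q h
  have h0 := congrArg (· 0) h
  have h1 := congrArg (· 1) h
  simp only [arctanField, PiLp.toLp_apply, Matrix.cons_val_zero, Matrix.cons_val_one] at h0 h1
  exact Prod.ext (by exact_mod_cast arctan_injective h0) (by exact_mod_cast arctan_injective h1)

theorem norm_arctanField_lt_pi (p : ℤ × ℤ) : ‖arctanField p‖ < π := by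
  have habs (x : ℝ) : |arctan x| < π / 2 :=
    abs_lt.mpr ⟨neg_pi_div_two_lt_arctan x, arctan_lt_pi_div_two x⟩
  calc ‖arctanField p‖ ≤ |arctan p.1| + |arctan p.2| := by
        simpa [Fin.sum_univ_two, arctanField] using (arctanField p).norm_le_sum_abs
    _ < π / 2 + π / 2 := add_lt_add (habs _) (habs _)
    _ = π := add_halves π

theorem norm_sub_arctanField_le_inner (x y : ℤ × ℤ) :
    ‖arctanField x - arctanField y‖ ≤
      ⟪latticeEmb x - latticeEmb y, arctanField x - arctanField y⟫ := by
  calc ‖arctanField x - arctanField y‖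
      ≤ |arctan x.1 - arctan y.1| + |arctan x.2 - arctan y.2| := by
        simpa [Fin.sum_univ_two, arctanField] using (arctanField x - arctanField y).norm_le_sum_abs
    _ ≤ (x.1 - y.1) * (arctan x.1 - arctan y.1) + (x.2 - y.2) * (arctan x.2 - arctan y.2) :=
        add_le_add (arctan_strictMono.monotone.abs_sub_le_intCast_sub_mul _ _)
          (arctan_strictMono.monotone.abs_sub_le_intCast_sub_mul _ _)
    _ = ⟪latticeEmb x - latticeEmb y, arctanField x - arctanField y⟫ := by
        simp only [latticeEmb, arctanField, PiLp.inner_apply, PiLp.sub_apply, RCLike.inner_apply,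
          ringHom_apply, Fin.sum_univ_two, Fin.isValue, Matrix.cons_val_zero, Matrix.cons_val_one,
          Matrix.cons_val_fin_one]
        ring

/-- There exist an injective velocity assignment `v : ℤ² → ℝ²` with speeds bounded
between positive constants `m ≤ M`, and a constant `c > 0`, such that all pairwise
distances of the moving particles `x + t·v(x)` stay at least `c` for all times. -/
theorem lattice_noncolliding_velocities :
    ∃ (v : ℤ × ℤ → EuclideanSpace ℝ (Fin 2)) (m M c : ℝ),
      0 < m ∧ m ≤ M ∧ 0 < c ∧
      Function.Injective v ∧
      (∀ x : ℤ × ℤ, m ≤ ‖v x‖ ∧ ‖v x‖ ≤ M) ∧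
      ∀ x y : ℤ × ℤ, x ≠ y → ∀ t : ℝ,
        ‖(latticeEmb x + t • v x) - (latticeEmb y + t • v y)‖ ≥ c := by
  let J := ((EuclideanSpace.basisFun (Fin 2) ℝ).toBasis.orientation).rightAngleRotation
  let a : EuclideanSpace ℝ (Fin 2) := EuclideanSpace.single 0 4
  have ha : ‖a‖ = 4 := by simp [a]
  refine ⟨fun p => a + J (arctanField p), 4 - π, 4 + π, 1, by linarith [pi_lt_four],
    by linarith [pi_pos], one_pos, ?_, fun p => ?_, fun x y hxy t => ?_⟩
  · exact fun x y h => arctanField_injective (J.injective (add_left_cancel h))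
  · have hJ : ‖J (arctanField p)‖ < π := (J.norm_map _).trans_lt (norm_arctanField_lt_pi p)
    exact ⟨by linarith [norm_sub_le_norm_add a (J (arctanField p))],
      by linarith [norm_add_le a (J (arctanField p))]⟩
  · exact one_le_norm_sub_of_skew_velocity J.toLinearEquiv.toLinearMap
      (Orientation.inner_rightAngleRotation_self _) latticeEmb arctanField a
      (arctanField_injective.ne hxy) (norm_sub_arctanField_le_inner x y) t
end

section
/- Let w : ℝ² → ℝ² be continuous and let c > 0 be such that |⟨x − y, w(x) − w(y)⟩| > c·‖w(x) − w(y)‖ for every pair x, y ∈ ℝ² with ‖x − y‖ > 1. Then either ⟨x − y, w(x) − w(y)⟩ > c·‖w(x) − w(y)‖ for every such pair, or ⟨x − y, w(x) − w(y)⟩ < −c·‖w(x) − w(y)‖ for every such pair. -/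
open scoped RealInnerProductSpace

open Set

lemma isPathConnected_far : IsConnected {z : EuclideanSpace ℝ (Fin 2) | 1 < ‖z‖} := by
  have hrank : 1 < Module.rank ℝ (EuclideanSpace ℝ (Fin 2)) := by
    rw [← Module.finrank_eq_rank, finrank_euclideanSpace_fin]
    exact_mod_cast one_lt_two
  have hsph : IsPathConnected (Metric.sphere (0 : EuclideanSpace ℝ (Fin 2)) 1) :=
    isPathConnected_sphere hrank 0 zero_le_one
  have hI : IsPathConnected (Ioi (1 : ℝ)) := (convex_Ioi 1).isPathConnected ⟨2, by norm_num⟩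
  have hprod := hI.isConnected.prod hsph.isConnected
  have himg := hprod.image _ ((by fun_prop :
    Continuous fun p : ℝ × EuclideanSpace ℝ (Fin 2) => p.1 • p.2).continuousOn)
  convert himg using 1
  ext z
  simp only [mem_image, mem_prod, mem_Ioi, Metric.mem_sphere, dist_zero_right, mem_setOf_eq]
  constructor
  · intro hz
    refine ⟨⟨‖z‖, ‖z‖⁻¹ • z⟩, ⟨hz, ?_⟩, ?_⟩
    · rw [norm_smul, norm_inv, norm_norm, inv_mul_cancel₀ (by positivity)]
    · rw [smul_smul, mul_inv_cancel₀ (by positivity), one_smul]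
  · rintro ⟨⟨t, v⟩, ⟨ht, hv⟩, rfl⟩
    rw [norm_smul, hv, mul_one]
    calc (1:ℝ) < t := ht
    _ ≤ ‖t‖ := le_abs_self t

lemma isPathConnected_pairs :
    IsConnected {p : EuclideanSpace ℝ (Fin 2) × EuclideanSpace ℝ (Fin 2) | 1 < ‖p.1 - p.2‖} := by
  have hA := isPathConnected_far
  have huniv : IsPathConnected (univ : Set (EuclideanSpace ℝ (Fin 2))) :=
    convex_univ.isPathConnected ⟨0, mem_univ 0⟩
  have hprod := huniv.isConnected.prod hA
  have himg := hprod.image _ ((by fun_prop :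
    Continuous fun p : EuclideanSpace ℝ (Fin 2) × EuclideanSpace ℝ (Fin 2) => (p.1, p.1 - p.2)).continuousOn)
  convert himg using 1
  ext ⟨x, y⟩
  simp only [mem_image, mem_prod, mem_univ, true_and, mem_setOf_eq, Prod.mk.injEq, Prod.exists]
  constructor
  · exact fun h => ⟨x, x - y, h, rfl, by abel⟩
  · rintro ⟨a, b, hb, rfl, rfl⟩
    simpa using hb

/-- If `w : ℝ² → ℝ²` is continuous and `c > 0` is such that
`|⟨x − y, w x − w y⟩| > c·‖w x − w y‖` whenever `‖x − y‖ > 1`, then the sign of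
`⟨x − y, w x − w y⟩` is constant over all such pairs. -/
theorem sign_constant_on_far_pairs (w : EuclideanSpace ℝ (Fin 2) → EuclideanSpace ℝ (Fin 2))
    (hw : Continuous w) (c : ℝ) (hc : 0 < c)
    (h : ∀ x y : EuclideanSpace ℝ (Fin 2), ‖x - y‖ > 1 →
      |⟪x - y, w x - w y⟫| > c * ‖w x - w y‖) :
    (∀ x y : EuclideanSpace ℝ (Fin 2), ‖x - y‖ > 1 →
        ⟪x - y, w x - w y⟫ > c * ‖w x - w y‖) ∨
    (∀ x y : EuclideanSpace ℝ (Fin 2), ‖x - y‖ > 1 →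
        ⟪x - y, w x - w y⟫ < -(c * ‖w x - w y‖)) := by
  set S : Set (EuclideanSpace ℝ (Fin 2) × EuclideanSpace ℝ (Fin 2)) :=
    {p | 1 < ‖p.1 - p.2‖} with hS
  set f : EuclideanSpace ℝ (Fin 2) × EuclideanSpace ℝ (Fin 2) → ℝ :=
    fun p => ⟪p.1 - p.2, w p.1 - w p.2⟫ with hf
  have hfc : Continuous f := by
    apply Continuous.inner <;> fun_prop
  have hne : ∀ p ∈ S, f p ≠ 0 := by
    intro p hp h0
    have := h p.1 p.2 hp
    have h0' : (⟪p.1 - p.2, w p.1 - w p.2⟫ : ℝ) = 0 := h0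
    rw [h0'] at this
    simp only [abs_zero] at this
    have : (0:ℝ) ≤ c * ‖w p.1 - w p.2‖ := by positivity
    linarith
  have hconn : IsPreconnected S := isPathConnected_pairs.isPreconnected
  -- sign constancy
  have key : (∀ p ∈ S, 0 < f p) ∨ (∀ p ∈ S, f p < 0) := by
    by_contra hcon
    push_neg at hcon
    obtain ⟨⟨p, hp, hp0⟩, ⟨q, hq, hq0⟩⟩ := hcon
    have hpneg : f p < 0 := lt_of_le_of_ne hp0 (hne p hp)
    have hqpos : 0 < f q := lt_of_le_of_ne (hq0) (Ne.symm (hne q hq))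
    have : (0:ℝ) ∈ Icc (f p) (f q) := ⟨hpneg.le, hqpos.le⟩
    obtain ⟨r, hr, hr0⟩ := hconn.intermediate_value hp hq hfc.continuousOn this
    exact hne r hr hr0
  rcases key with hpos | hneg
  · left
    intro x y hxy
    have h1 := h x y hxy
    have h2 := hpos (x, y) hxy
    rwa [abs_of_pos h2] at h1
  · right
    intro x y hxy
    have h1 := h x y hxy
    have h2 := hneg (x, y) hxy
    rw [abs_of_neg h2] at h1
    linarith
end

section
/- Let w : ℝ² → ℝ² be a function and let a > 0. Suppose that ⟨x − y, w(x) − w(y)⟩ ≥ a·‖x − y‖·‖w(x) − w(y)‖ for every pair x, y ∈ ℝ² with 1 < ‖x − y‖ ≤ 2. Then the same inequality ⟨x − y, w(x) − w(y)⟩ ≥ a·‖x − y‖·‖w(x) − w(y)‖ holds for every pair x, y ∈ ℝ² with ‖x − y‖ > 1. -/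
open scoped RealInnerProductSpace

/-- If `⟨x − y, w x − w y⟩ ≥ a·‖x − y‖·‖w x − w y‖` for every pair with
`1 < ‖x − y‖ ≤ 2`, then the same inequality holds for every pair with `‖x − y‖ > 1`. -/
theorem cone_condition_extends (w : EuclideanSpace ℝ (Fin 2) → EuclideanSpace ℝ (Fin 2))
    (a : ℝ) (ha : 0 < a)
    (h : ∀ x y : EuclideanSpace ℝ (Fin 2), 1 < ‖x - y‖ → ‖x - y‖ ≤ 2 →
      ⟪x - y, w x - w y⟫ ≥ a * ‖x - y‖ * ‖w x - w y‖) :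
    ∀ x y : EuclideanSpace ℝ (Fin 2), ‖x - y‖ > 1 →
      ⟪x - y, w x - w y⟫ ≥ a * ‖x - y‖ * ‖w x - w y‖ := by
  have key : ∀ n : ℕ, ∀ x y : EuclideanSpace ℝ (Fin 2), 1 < ‖x - y‖ → ‖x - y‖ ≤ 2 ^ (n + 1) →
      ⟪x - y, w x - w y⟫ ≥ a * ‖x - y‖ * ‖w x - w y‖ := by
    intro n
    induction n with
    | zero =>
      intro x y h1 h2
      exact h x y h1 (by simpa using h2)
    | succ n ih =>
      intro x y h1 h2
      by_cases hle : ‖x - y‖ ≤ 2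
      · exact h x y h1 hle
      · push_neg at hle
        set m : EuclideanSpace ℝ (Fin 2) := x - (2:ℝ)⁻¹ • (x - y) with hm
        have hxm : x - m = (2:ℝ)⁻¹ • (x - y) := by rw [hm]; module
        have hmy : m - y = (2:ℝ)⁻¹ • (x - y) := by rw [hm]; module
        have hnorm : ‖(2:ℝ)⁻¹ • (x - y)‖ = 2⁻¹ * ‖x - y‖ := by
          rw [norm_smul]; norm_num
        have hp : (2:ℝ) ^ (n + 1 + 1) = 2 * 2 ^ (n + 1) := by ring
        have h1' : 1 < ‖x - m‖ := by rw [hxm, hnorm]; linarith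
        have h2' : ‖x - m‖ ≤ 2 ^ (n + 1) := by rw [hxm, hnorm]; rw [hp] at h2; linarith
        have h1'' : 1 < ‖m - y‖ := by rw [hmy, hnorm]; linarith
        have h2'' : ‖m - y‖ ≤ 2 ^ (n + 1) := by rw [hmy, hnorm]; rw [hp] at h2; linarith
        have hA := ih x m h1' h2'
        have hB := ih m y h1'' h2''
        have e1 : ⟪x - y, w x - w m⟫ = 2 * ⟪x - m, w x - w m⟫ := by
          have hxy2 : x - y = (2:ℝ) • (x - m) := by rw [hxm]; module
          rw [hxy2, real_inner_smul_left]
        have e2 : ⟪x - y, w m - w y⟫ = 2 * ⟪m - y, w m - w y⟫ := by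
          have hxy2 : x - y = (2:ℝ) • (m - y) := by rw [hmy]; module
          rw [hxy2, real_inner_smul_left]
        have esplit : ⟪x - y, w x - w y⟫ = ⟪x - y, w x - w m⟫ + ⟪x - y, w m - w y⟫ := by
          rw [← inner_add_right]
          congr 1
          abel
        have enormA : ‖x - y‖ = 2 * ‖x - m‖ := by rw [hxm, hnorm]; ring
        have enormB : ‖x - y‖ = 2 * ‖m - y‖ := by rw [hmy, hnorm]; ring
        have tri : ‖w x - w y‖ ≤ ‖w x - w m‖ + ‖w m - w y‖ := by
          have := dist_triangle (w x) (w m) (w y)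
          simpa [dist_eq_norm] using this
        have hnA : (0:ℝ) ≤ ‖w x - w m‖ := norm_nonneg _
        have hnB : (0:ℝ) ≤ ‖w m - w y‖ := norm_nonneg _
        have hstep : a * ‖x - y‖ * ‖w x - w y‖ ≤ a * ‖x - y‖ * (‖w x - w m‖ + ‖w m - w y‖) := by
          apply mul_le_mul_of_nonneg_left tri
          positivity
        have hA' : (2:ℝ) * ⟪x - m, w x - w m⟫ ≥ a * ‖x - y‖ * ‖w x - w m‖ := by
          rw [enormA]; nlinarith [hA]
        have hB' : (2:ℝ) * ⟪m - y, w m - w y⟫ ≥ a * ‖x - y‖ * ‖w m - w y‖ := by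
          rw [enormB]; nlinarith [hB]
        linarith [esplit, e1, e2, hstep, hA', hB']
  intro x y hxy
  obtain ⟨n, hn⟩ := pow_unbounded_of_one_lt ‖x - y‖ (by norm_num : (1:ℝ) < 2)
  have : ‖x - y‖ ≤ 2 ^ (n + 1) := by
    have : (2:ℝ) ^ n ≤ 2 ^ (n + 1) := by
      apply pow_le_pow_right₀ (by norm_num)
      omega
    linarith
  exact key n x y hxy this
end
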